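/- arXiv:math/0512226 — 6 statements merged into one kernel-verified Lean document; each statement's English description precedes it below -/
import Mathlib

section
/- Let (X,d) be a compact metric space and δ₁,…,δ_N : X → X maps such that δ₁(X) ∪ … ∪ δ_N(X) = X and each δ_i is strictly contractive in the weak sense: x ≠ y implies d(δ_i(x), δ_i(y)) < d(x,y). Then for every x₀ ∈ X, the orbit O(x₀) = {σ(x₀) : σ a finite composition of maps from {δ₁,…,δ_N}} is dense in X. -/
theorem orbit_dense_of_contracting_cover
    {X : Type*} [MetricSpace X] [CompactSpace X] {N : ℕ}
    (δ : Fin N → X → X)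
    (hcover : (⋃ i, Set.range (δ i)) = Set.univ)
    (hcontr : ∀ i, ∀ x y : X, x ≠ y → dist (δ i x) (δ i y) < dist x y)
    (x₀ : X) :
    Dense {y : X | ∃ l : List (Fin N), l.foldr (fun i z => δ i z) x₀ = y} := by
  rcases isEmpty_or_nonempty X with hX | hX
  · intro x; exact (hX.false x).elim
  have hlip : ∀ i, ∀ a b : X, dist (δ i a) (δ i b) ≤ dist a b := by
    intro i a b
    rcases eq_or_ne a b with rfl | h
    · simp
    · exact (hcontr i a b h).le
  rw [Metric.dense_iff]
  intro y ε hε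
  by_cases hK : ∃ p : X × X, ε ≤ dist p.1 p.2
  · -- main case
    set K : Set (X × X) := {p | ε ≤ dist p.1 p.2} with hKdef
    have hcontδ : ∀ i, Continuous (δ i) := fun i =>
      (LipschitzWith.of_dist_le_mul (K := 1) (fun a b => by
        simpa using hlip i a b)).continuous
    have hKclosed : IsClosed K := by
      apply isClosed_le continuous_const
      exact continuous_fst.dist continuous_snd
    have hKc : IsCompact K := hKclosed.isCompact
    have hKne : K.Nonempty := hK
    have hgap : ∀ i : Fin N, ∃ γ > 0, ∀ p ∈ K,
        dist (δ i p.1) (δ i p.2) ≤ dist p.1 p.2 - γ := by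
      intro i
      have hfc : ContinuousOn
          (fun p : X × X => dist p.1 p.2 - dist (δ i p.1) (δ i p.2)) K := by
        apply Continuous.continuousOn
        exact (continuous_fst.dist continuous_snd).sub
          (((hcontδ i).comp continuous_fst).dist ((hcontδ i).comp continuous_snd))
      obtain ⟨p₀, hp₀K, hmin⟩ := hKc.exists_isMinOn hKne hfc
      have hεd : ε ≤ dist p₀.1 p₀.2 := hp₀K
      have hne : p₀.1 ≠ p₀.2 := by
        intro h
        rw [h] at hεd
        simp at hεd
        linarith
      refine ⟨dist p₀.1 p₀.2 - dist (δ i p₀.1) (δ i p₀.2),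
        sub_pos.2 (hcontr i _ _ hne), fun p hp => ?_⟩
      have := hmin hp; simp only [Set.mem_setOf_eq] at this
      linarith
    choose γf hγpos hγ using hgap
    have hiN : Nonempty (Fin N) := by
      obtain ⟨x⟩ := hX
      have hx : x ∈ ⋃ i, Set.range (δ i) := hcover ▸ Set.mem_univ x
      obtain ⟨i, -⟩ := Set.mem_iUnion.1 hx
      exact ⟨i⟩
    have hFne : (Finset.univ : Finset (Fin N)).Nonempty := Finset.univ_nonempty
    set γ : ℝ := Finset.univ.inf' hFne γf with hγdef
    have γpos : 0 < γ := by
      rw [hγdef, Finset.lt_inf'_iff]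
      exact fun i _ => hγpos i
    obtain ⟨C, hC⟩ : ∃ C : ℝ, ∀ x y : X, dist x y ≤ C := by
      obtain ⟨C, hC⟩ := Metric.isBounded_iff.1
        (isCompact_univ (X := X)).isBounded
      exact ⟨C, fun x y => hC (Set.mem_univ x) (Set.mem_univ y)⟩
    obtain ⟨n, hn⟩ : ∃ n : ℕ, C < n * γ := by
      obtain ⟨n, hn⟩ := exists_nat_gt (C / γ)
      exact ⟨n, (div_lt_iff₀ γpos).1 hn⟩
    have hchain : ∀ (n : ℕ) (w : X), ∃ (l : List (Fin N)) (z : X),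
        l.length = n ∧ l.foldr (fun i z => δ i z) z = w := by
      intro n
      induction n with
      | zero => exact fun w => ⟨[], w, rfl, rfl⟩
      | succ n ih =>
        intro w
        have hw : w ∈ ⋃ i, Set.range (δ i) := hcover ▸ Set.mem_univ w
        obtain ⟨i, v, hv⟩ : ∃ i v, δ i v = w := by simpa using hw
        obtain ⟨l, z, hl, hfold⟩ := ih v
        exact ⟨i :: l, z, by simp [hl], by simp [hfold, hv]⟩
    have hdec : ∀ (l : List (Fin N)) (z : X),
        dist (l.foldr (fun i z => δ i z) x₀) (l.foldr (fun i z => δ i z) z) < ε ∨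
        dist (l.foldr (fun i z => δ i z) x₀) (l.foldr (fun i z => δ i z) z)
          ≤ C - l.length * γ := by
      intro l z
      induction l with
      | nil => right; simpa using hC x₀ z
      | cons i l ih =>
        set a := l.foldr (fun i z => δ i z) x₀ with ha
        set b := l.foldr (fun i z => δ i z) z with hb
        have hfa : (i :: l).foldr (fun i z => δ i z) x₀ = δ i a := rfl
        have hfb : (i :: l).foldr (fun i z => δ i z) z = δ i b := rfl
        rw [hfa, hfb]
        by_cases hab : dist a b < ε
        · exact Or.inl (lt_of_le_of_lt (hlip i a b) hab)
        · push_neg at hab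
          have hmem : (a, b) ∈ K := hab
          have h1 : dist (δ i a) (δ i b) ≤ dist a b - γf i := hγ i (a, b) hmem
          have h2 : dist a b ≤ C - l.length * γ := ih.resolve_left (not_lt.2 hab)
          have hγle : γ ≤ γf i := Finset.inf'_le _ (Finset.mem_univ i)
          right
          have hlen : (((i :: l).length : ℕ) : ℝ) * γ = (l.length : ℝ) * γ + γ := by
            push_cast [List.length_cons]; ring
          rw [hlen]
          linarith
    obtain ⟨l, z, hl, hfold⟩ := hchain n y
    have hdist : dist (l.foldr (fun i z => δ i z) x₀) y < ε := by
      rcases hdec l z with h | h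
      · rwa [hfold] at h
      · rw [hfold] at h
        have : C - (l.length : ℝ) * γ < ε := by
          rw [hl]; linarith
        linarith
    exact ⟨_, Metric.mem_ball.2 hdist, ⟨l, rfl⟩⟩
  · push_neg at hK
    refine ⟨x₀, Metric.mem_ball.2 (hK (x₀, y)), ⟨[], rfl⟩⟩
end

section
/- Let I = [a,b] be a closed interval, H : ℝ × ℝ × I × I → ℝ any function, and F : I² → I a continuous function satisfying: (1) for all x ≠ y in I, |F(x,b) − F(y,b)| < |x − y| and |F(a,x) − F(a,y)| < |x − y|; (2) there exist x₀, y₀ ∈ I with F(a,x₀) = a and F(y₀,b) = b. Let Γ = ([a,b] × {b}) ∪ ({a} × [a,b]). If f₁, f₂ : I → ℝ are continuous, satisfy f(F(x,y)) = H(f(x), f(y), x, y) for all (x,y) ∈ Γ, and f₁(a) = f₂(a), f₁(b) = f₂(b), then f₁ = f₂ on I. -/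
theorem uniqueness_on_boundary_Gamma
    {a b : ℝ} (hab : a < b)
    (H : ℝ → ℝ → ℝ → ℝ → ℝ) (F : ℝ → ℝ → ℝ)
    (hFmap : ∀ x ∈ Set.Icc a b, ∀ y ∈ Set.Icc a b, F x y ∈ Set.Icc a b)
    (hFcont : ContinuousOn (fun p : ℝ × ℝ => F p.1 p.2) (Set.Icc a b ×ˢ Set.Icc a b))
    (hcontr : ∀ x ∈ Set.Icc a b, ∀ y ∈ Set.Icc a b, x ≠ y →
      |F x b - F y b| < |x - y| ∧ |F a x - F a y| < |x - y|)
    (hx₀ : ∃ x₀ ∈ Set.Icc a b, F a x₀ = a)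
    (hy₀ : ∃ y₀ ∈ Set.Icc a b, F y₀ b = b)
    (f₁ f₂ : ℝ → ℝ)
    (hf₁ : ContinuousOn f₁ (Set.Icc a b)) (hf₂ : ContinuousOn f₂ (Set.Icc a b))
    (heq₁ : ∀ x ∈ Set.Icc a b,
      f₁ (F x b) = H (f₁ x) (f₁ b) x b ∧ f₁ (F a x) = H (f₁ a) (f₁ x) a x)
    (heq₂ : ∀ x ∈ Set.Icc a b,
      f₂ (F x b) = H (f₂ x) (f₂ b) x b ∧ f₂ (F a x) = H (f₂ a) (f₂ x) a x)
    (ha : f₁ a = f₂ a) (hb : f₁ b = f₂ b) :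
    ∀ x ∈ Set.Icc a b, f₁ x = f₂ x := by
  obtain ⟨x₀, hx₀I, hx₀e⟩ := hx₀
  obtain ⟨y₀, hy₀I, hy₀e⟩ := hy₀
  have haI : a ∈ Set.Icc a b := ⟨le_refl a, hab.le⟩
  have hbI : b ∈ Set.Icc a b := ⟨hab.le, le_refl b⟩
  set Z : Set ℝ := Set.Icc a b ∩ (fun x => f₁ x - f₂ x) ⁻¹' {0} with hZdef
  have hZmem : ∀ x, x ∈ Z ↔ x ∈ Set.Icc a b ∧ f₁ x = f₂ x := by
    intro x
    simp only [hZdef, Set.mem_inter_iff, Set.mem_preimage, Set.mem_singleton_iff,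
      sub_eq_zero]
  have haZ : a ∈ Z := (hZmem a).2 ⟨haI, ha⟩
  have hbZ : b ∈ Z := (hZmem b).2 ⟨hbI, hb⟩
  have hZne : Z.Nonempty := ⟨a, haZ⟩
  have hZclosed : IsClosed Z :=
    ContinuousOn.preimage_isClosed_of_isClosed (hf₁.sub hf₂) isClosed_Icc isClosed_singleton
  have hZcompact : IsCompact Z :=
    IsCompact.of_isClosed_subset isCompact_Icc hZclosed Set.inter_subset_left
  -- invariance of Z under the two boundary maps
  have hinv1 : ∀ z ∈ Z, F z b ∈ Z := by
    intro z hz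
    obtain ⟨hzI, hze⟩ := (hZmem z).1 hz
    refine (hZmem _).2 ⟨hFmap z hzI b hbI, ?_⟩
    rw [(heq₁ z hzI).1, (heq₂ z hzI).1, hze, hb]
  have hinv2 : ∀ z ∈ Z, F a z ∈ Z := by
    intro z hz
    obtain ⟨hzI, hze⟩ := (hZmem z).1 hz
    refine (hZmem _).2 ⟨hFmap a haI z hzI, ?_⟩
    rw [(heq₁ z hzI).2, (heq₂ z hzI).2, hze, ha]
  -- continuity of the sections
  have hφ : ContinuousOn (fun x => F x b) (Set.Icc a b) := by
    have : ContinuousOn ((fun p : ℝ × ℝ => F p.1 p.2) ∘ (fun x => (x, b)))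
        (Set.Icc a b) :=
      hFcont.comp ((continuous_id.prodMk continuous_const).continuousOn)
        (fun x hx => ⟨hx, hbI⟩)
    exact this
  have hψ : ContinuousOn (fun y => F a y) (Set.Icc a b) := by
    have : ContinuousOn ((fun p : ℝ × ℝ => F p.1 p.2) ∘ (fun y => (a, y)))
        (Set.Icc a b) :=
      hFcont.comp ((continuous_const.prodMk continuous_id).continuousOn)
        (fun y hy => ⟨haI, hy⟩)
    exact this
  -- every point of [a,b] is in the range of one of the two boundary maps
  have hsurj : ∀ t ∈ Set.Icc a b, ∃ y ∈ Set.Icc a b, F y b = t ∨ F a y = t := by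
    intro t htI
    by_cases hc : t ≤ F a b
    · have hsub : Set.Icc x₀ b ⊆ Set.Icc a b := Set.Icc_subset_Icc hx₀I.1 le_rfl
      have hIV := intermediate_value_Icc hx₀I.2 (hψ.mono hsub)
      have ht : t ∈ Set.Icc (F a x₀) (F a b) := by
        rw [hx₀e]; exact ⟨htI.1, hc⟩
      obtain ⟨y, hy, hyt⟩ := hIV ht
      exact ⟨y, hsub hy, Or.inr hyt⟩
    · have hsub : Set.Icc a y₀ ⊆ Set.Icc a b := Set.Icc_subset_Icc le_rfl hy₀I.2
      have hIV := intermediate_value_Icc hy₀I.1 (hφ.mono hsub)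
      have ht : t ∈ Set.Icc (F a b) (F y₀ b) := by
        rw [hy₀e]; exact ⟨(not_le.mp hc).le, htI.2⟩
      obtain ⟨y, hy, hyt⟩ := hIV ht
      exact ⟨y, hsub hy, Or.inl hyt⟩
  -- take the point of [a,b] farthest from Z
  obtain ⟨w, hwI, hwmax⟩ :=
    isCompact_Icc.exists_isMaxOn ⟨a, haI⟩
      ((Metric.continuous_infDist_pt Z).continuousOn)
  have hzero : Metric.infDist w Z = 0 := by
    by_contra hd
    have hdpos : 0 < Metric.infDist w Z :=
      lt_of_le_of_ne Metric.infDist_nonneg (Ne.symm hd)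
    obtain ⟨y, hyI, hy⟩ := hsurj w hwI
    obtain ⟨z, hzZ, hz⟩ := hZcompact.exists_infDist_eq_dist hZne y
    have hzI : z ∈ Set.Icc a b := ((hZmem z).1 hzZ).1
    rcases eq_or_ne y z with rfl | hne
    · -- then w ∈ Z, contradicting infDist w Z > 0
      have hwZ : w ∈ Z := by
        rcases hy with h | h
        · exact h ▸ hinv1 y hzZ
        · exact h ▸ hinv2 y hzZ
      exact hd (Metric.infDist_zero_of_mem hwZ)
    · have hcon := hcontr y hyI z hzI hne
      have hkey : Metric.infDist w Z < dist y z := by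
        rcases hy with h | h
        · calc Metric.infDist w Z ≤ dist w (F z b) :=
                Metric.infDist_le_dist_of_mem (hinv1 z hzZ)
            _ < dist y z := by
                rw [← h, Real.dist_eq, Real.dist_eq]; exact hcon.1
        · calc Metric.infDist w Z ≤ dist w (F a z) :=
                Metric.infDist_le_dist_of_mem (hinv2 z hzZ)
            _ < dist y z := by
                rw [← h, Real.dist_eq, Real.dist_eq]; exact hcon.2
      have : dist y z ≤ Metric.infDist w Z := by
        rw [← hz]; exact hwmax hyI
      exact absurd (lt_of_lt_of_le hkey this) (lt_irrefl _)
  -- conclude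
  intro x hxI
  have hx0 : Metric.infDist x Z = 0 :=
    le_antisymm (by simpa [hzero] using hwmax hxI) Metric.infDist_nonneg
  have hxZ : x ∈ Z := (hZclosed.mem_iff_infDist_zero hZne).2 hx0
  exact ((hZmem x).1 hxZ).2
end

section
/- Let I = [a,b], F : I² → I continuous with |F(x,b) − F(y,b)| < |x−y| and |F(a,x) − F(a,y)| < |x−y| for x ≠ y, and suppose there exist x₀, y₀ ∈ I with F(a,x₀) = a and F(y₀,b) = b. Define δ₁(x) = F(a,x), δ₂(x) = F(x,b). Then the orbit of every point of I under the semigroup generated by {δ₁, δ₂} is dense in I. -/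
/-- Helper: a strictly contracting continuous map on a compact interval contracts
distances `≥ ε` by a uniform factor `c < 1`. -/
lemma exists_contraction_const_aux {a b : ℝ} (f : ℝ → ℝ)
    (hf : ContinuousOn f (Set.Icc a b))
    (hc : ∀ x ∈ Set.Icc a b, ∀ y ∈ Set.Icc a b, x ≠ y → |f x - f y| < |x - y|)
    {ε : ℝ} (hε : 0 < ε) :
    ∃ c, 0 ≤ c ∧ c < 1 ∧ ∀ x ∈ Set.Icc a b, ∀ y ∈ Set.Icc a b,
      ε ≤ |x - y| → |f x - f y| ≤ c * |x - y| := by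
  set K : Set (ℝ × ℝ) :=
    (Set.Icc a b ×ˢ Set.Icc a b) ∩ {p : ℝ × ℝ | ε ≤ |p.1 - p.2|} with hKdef
  have hKcl : IsClosed {p : ℝ × ℝ | ε ≤ |p.1 - p.2|} :=
    isClosed_le continuous_const ((continuous_fst.sub continuous_snd).abs)
  have hK : IsCompact K :=
    ((isCompact_Icc.prod isCompact_Icc).inter_right hKcl)
  rcases K.eq_empty_or_nonempty with hKe | hKne
  · refine ⟨1/2, by norm_num, by norm_num, ?_⟩
    intro x hx y hy hxy
    exfalso
    have : (x, y) ∈ K := ⟨⟨hx, hy⟩, hxy⟩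
    rw [hKe] at this; exact this
  · set g : ℝ × ℝ → ℝ := fun p => |f p.1 - f p.2| / |p.1 - p.2| with hg
    have hgcont : ContinuousOn g K := by
      apply ContinuousOn.div
      · exact ((hf.comp continuousOn_fst (fun p hp => hp.1.1)).sub
          (hf.comp continuousOn_snd (fun p hp => hp.1.2))).abs
      · exact ((continuous_fst.sub continuous_snd).abs).continuousOn
      · intro p hp
        exact ne_of_gt (lt_of_lt_of_le hε hp.2)
    obtain ⟨p₀, hp₀K, hmax⟩ := hK.exists_isMaxOn hKne hgcont
    have hdenpos : 0 < |p₀.1 - p₀.2| := lt_of_lt_of_le hε hp₀K.2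
    have hne : p₀.1 ≠ p₀.2 := by
      intro h; rw [h] at hdenpos; simp at hdenpos
    refine ⟨g p₀, div_nonneg (abs_nonneg _) (abs_nonneg _), ?_, ?_⟩
    · rw [hg]
      exact (div_lt_one hdenpos).mpr (hc _ hp₀K.1.1 _ hp₀K.1.2 hne)
    · intro x hx y hy hxy
      have hmem : (x, y) ∈ K := ⟨⟨hx, hy⟩, hxy⟩
      have := hmax hmem
      have hpos : 0 < |x - y| := lt_of_lt_of_le hε hxy
      calc |f x - f y| = g (x, y) * |x - y| := by
            rw [hg]; field_simp
        _ ≤ g p₀ * |x - y| := by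
            exact mul_le_mul_of_nonneg_right this (abs_nonneg _)

theorem orbit_dense_in_interval
    {a b : ℝ} (hab : a < b) (F : ℝ → ℝ → ℝ)
    (hFmap : ∀ x ∈ Set.Icc a b, ∀ y ∈ Set.Icc a b, F x y ∈ Set.Icc a b)
    (hFcont : ContinuousOn (fun p : ℝ × ℝ => F p.1 p.2) (Set.Icc a b ×ˢ Set.Icc a b))
    (hcontr : ∀ x ∈ Set.Icc a b, ∀ y ∈ Set.Icc a b, x ≠ y →
      |F x b - F y b| < |x - y| ∧ |F a x - F a y| < |x - y|)
    (hx₀ : ∃ x₀ ∈ Set.Icc a b, F a x₀ = a)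
    (hy₀ : ∃ y₀ ∈ Set.Icc a b, F y₀ b = b) :
    ∀ x ∈ Set.Icc a b,
      Set.Icc a b ⊆
        closure {y : ℝ | ∃ l : List Bool,
          l.foldr (fun s t => if s then F a t else F t b) x = y} := by
  obtain ⟨x₀, hx₀I, hx₀e⟩ := hx₀
  obtain ⟨y₀, hy₀I, hy₀e⟩ := hy₀
  have haI : a ∈ Set.Icc a b := Set.left_mem_Icc.mpr hab.le
  have hbI : b ∈ Set.Icc a b := Set.right_mem_Icc.mpr hab.le
  set step : Bool → ℝ → ℝ := fun s t => if s then F a t else F t b with hstep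
  -- step maps I into I
  have hmap : ∀ s, ∀ x ∈ Set.Icc a b, step s x ∈ Set.Icc a b := by
    intro s x hx
    cases s
    · simpa [step] using hFmap x hx b hbI
    · simpa [step] using hFmap a haI x hx
  -- nonexpansive
  have hlip : ∀ s, ∀ x ∈ Set.Icc a b, ∀ y ∈ Set.Icc a b,
      |step s x - step s y| ≤ |x - y| := by
    intro s x hx y hy
    rcases eq_or_ne x y with rfl | h
    · simp
    · cases s
      · simpa [step] using (hcontr x hx y hy h).1.le
      · simpa [step] using (hcontr x hx y hy h).2.le
  -- continuity of the two branch maps on I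
  have hcont : ∀ s, ContinuousOn (step s) (Set.Icc a b) := by
    intro s
    refine LipschitzOnWith.continuousOn (K := 1) ?_
    intro x hx y hy
    rw [edist_dist, edist_dist, Real.dist_eq, Real.dist_eq]
    calc (ENNReal.ofReal |step s x - step s y|) ≤ ENNReal.ofReal |x - y| :=
          ENNReal.ofReal_le_ofReal (hlip s x hx y hy)
      _ ≤ 1 * ENNReal.ofReal |x - y| := by rw [one_mul]
  -- covering: every point of I is in the image of one of the two maps
  have hcover : ∀ z ∈ Set.Icc a b, ∃ s, ∃ w ∈ Set.Icc a b, step s w = z := by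
    intro z hz
    have hm : F a b ∈ Set.Icc a b := hFmap a haI b hbI
    rcases le_total z (F a b) with hle | hle
    · -- use δ₁ = step true
      have hsub : Set.uIcc x₀ b ⊆ Set.Icc a b := Set.uIcc_subset_Icc hx₀I hbI
      have := intermediate_value_uIcc ((hcont true).mono hsub)
      have hz' : z ∈ Set.uIcc (step true x₀) (step true b) := by
        have h1 : step true x₀ = a := by simpa [step] using hx₀e
        have h2 : step true b = F a b := by simp [step]
        rw [h1, h2]
        exact Set.mem_uIcc.mpr (Or.inl ⟨hz.1, hle⟩)
      obtain ⟨w, hw, hwe⟩ := this hz'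
      exact ⟨true, w, hsub hw, hwe⟩
    · -- use δ₂ = step false
      have hsub : Set.uIcc a y₀ ⊆ Set.Icc a b := Set.uIcc_subset_Icc haI hy₀I
      have := intermediate_value_uIcc ((hcont false).mono hsub)
      have hz' : z ∈ Set.uIcc (step false a) (step false y₀) := by
        have h1 : step false a = F a b := by simp [step]
        have h2 : step false y₀ = b := by simpa [step] using hy₀e
        rw [h1, h2]
        exact Set.mem_uIcc.mpr (Or.inl ⟨hle, hz.2⟩)
      obtain ⟨w, hw, hwe⟩ := this hz'
      exact ⟨false, w, hsub hw, hwe⟩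
  -- iterated maps stay in I
  have hΦmap : ∀ l : List Bool, ∀ x ∈ Set.Icc a b,
      l.foldr step x ∈ Set.Icc a b := by
    intro l
    induction l with
    | nil => intro x hx; simpa using hx
    | cons s l ih =>
      intro x hx
      simpa using hmap s _ (ih x hx)
  -- backward itineraries of any length
  have hitin : ∀ N : ℕ, ∀ z ∈ Set.Icc a b,
      ∃ l : List Bool, l.length = N ∧ ∃ w ∈ Set.Icc a b, l.foldr step w = z := by
    intro N
    induction N with
    | zero => intro z hz; exact ⟨[], rfl, z, hz, rfl⟩
    | succ N ih =>
      intro z hz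
      obtain ⟨s, w₁, hw₁, hw₁e⟩ := hcover z hz
      obtain ⟨l, hl, w, hw, hwe⟩ := ih w₁ hw₁
      exact ⟨s :: l, by simp [hl], w, hw, by simp [hwe, hw₁e]⟩
  -- main argument
  intro x hx z hz
  rw [Metric.mem_closure_iff]
  intro ε hε
  -- uniform contraction constant for threshold ε/2
  have hε2 : (0:ℝ) < ε / 2 := by linarith
  obtain ⟨c₁, hc₁0, hc₁1, hc₁⟩ := exists_contraction_const_aux (fun t => F a t)
    ((hcont true).congr (by intro t ht; simp [step])) (fun u hu v hv huv => (hcontr u hu v hv huv).2) hε2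
  obtain ⟨c₂, hc₂0, hc₂1, hc₂⟩ := exists_contraction_const_aux (fun t => F t b)
    ((hcont false).congr (by intro t ht; simp [step])) (fun u hu v hv huv => (hcontr u hu v hv huv).1) hε2
  set c : ℝ := max c₁ c₂ with hc
  have hc0 : 0 ≤ c := le_trans hc₁0 (le_max_left _ _)
  have hc1 : c < 1 := max_lt hc₁1 hc₂1
  have hstepc : ∀ s, ∀ u ∈ Set.Icc a b, ∀ v ∈ Set.Icc a b, ε / 2 ≤ |u - v| →
      |step s u - step s v| ≤ c * |u - v| := by
    intro s u hu v hv huv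
    cases s
    · calc |step false u - step false v| ≤ c₂ * |u - v| := by
            simpa [step] using hc₂ u hu v hv huv
        _ ≤ c * |u - v| := mul_le_mul_of_nonneg_right (le_max_right _ _) (abs_nonneg _)
    · calc |step true u - step true v| ≤ c₁ * |u - v| := by
            simpa [step] using hc₁ u hu v hv huv
        _ ≤ c * |u - v| := mul_le_mul_of_nonneg_right (le_max_left _ _) (abs_nonneg _)
  -- key estimate
  have hkey : ∀ l : List Bool, ∀ u ∈ Set.Icc a b, ∀ v ∈ Set.Icc a b,
      |l.foldr step u - l.foldr step v| ≤ max (ε / 2) (c ^ l.length * |u - v|) := by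
    intro l
    induction l with
    | nil => intro u hu v hv; simp
    | cons s l ih =>
      intro u hu v hv
      have hU := hΦmap l u hu
      have hV := hΦmap l v hv
      set U := l.foldr step u
      set V := l.foldr step v
      have hfold : (s :: l).foldr step u = step s U := rfl
      have hfold' : (s :: l).foldr step v = step s V := rfl
      rw [hfold, hfold']
      rcases lt_or_ge (|U - V|) (ε / 2) with hcase | hcase
      · calc |step s U - step s V| ≤ |U - V| := hlip s U hU V hV
          _ ≤ ε / 2 := hcase.le
          _ ≤ max (ε / 2) _ := le_max_left _ _
      · calc |step s U - step s V| ≤ c * |U - V| := hstepc s U hU V hV hcase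
          _ ≤ c * max (ε / 2) (c ^ l.length * |u - v|) :=
              mul_le_mul_of_nonneg_left (ih u hu v hv) hc0
          _ = max (c * (ε / 2)) (c * (c ^ l.length * |u - v|)) :=
              mul_max_of_nonneg _ _ hc0
          _ ≤ max (ε / 2) (c ^ (s :: l).length * |u - v|) := by
              apply max_le_max
              · nlinarith
              · rw [List.length_cons, pow_succ]
                ring_nf
                exact le_of_eq (by ring)
  -- choose N with c^N * (b - a) < ε / 2
  obtain ⟨N, hN⟩ : ∃ N : ℕ, c ^ N * (b - a) < ε / 2 := by
    have hba : (0:ℝ) < b - a := by linarith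
    obtain ⟨N, hN⟩ := exists_pow_lt_of_lt_one (div_pos hε2 hba) hc1
    exact ⟨N, by
      rw [← lt_div_iff₀ hba]
      exact hN⟩
  obtain ⟨l, hl, w, hw, hwe⟩ := hitin N z hz
  refine ⟨l.foldr step x, ⟨l, rfl⟩, ?_⟩
  have hbound := hkey l w hw x hx
  have hdist : |w - x| ≤ b - a := by
    rw [abs_sub_le_iff]
    constructor <;> [linarith [hw.1, hw.2, hx.1, hx.2]; linarith [hw.1, hw.2, hx.1, hx.2]]
  have h1 : c ^ l.length * |w - x| ≤ c ^ N * (b - a) := by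
    rw [hl]
    exact mul_le_mul_of_nonneg_left hdist (pow_nonneg hc0 N)
  rw [Real.dist_eq]
  calc |z - l.foldr step x| = |l.foldr step w - l.foldr step x| := by rw [hwe]
    _ ≤ max (ε / 2) (c ^ l.length * |w - x|) := hbound
    _ ≤ max (ε / 2) (c ^ N * (b - a)) := max_le_max le_rfl h1
    _ < ε := max_lt (by linarith) (by linarith)
end

section
/- Let α, β > 0 with α + β = 1, I = [a,b] with a < b, and Γ = ([a,b] × {b}) ∪ ({a} × [a,b]). Every continuous f : I → ℝ satisfying f(αx + βy) = αf(x) + βf(y) for all (x,y) ∈ Γ (the equation restricted to the boundary set Γ) is of the form f(z) = λz + μ; in particular, f is uniquely determined by its values at a and b. -/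
/-!
The difference `h` of two continuous solutions with the same values at `a` and `b` satisfies
`h (α x + β b) = α h x` and `h (α a + β x) = β h x`. The two maps `x ↦ α x + β b` and
`x ↦ α a + β x` send `[a, b]` onto `[α a + β b, b]` and `[a, α a + β b]`, so every point of `[a, b]`
is the image of some point of `[a, b]` under a contraction that scales `|h|` by `α < 1` or
`β < 1`. At a maximum of `|h|` this forces `max |h| = 0`. The affine interpolant of
`(a, f a)` and `(b, f b)` is a solution, so every solution is affine.
-/

open Set

theorem IsCompact.norm_eq_zero_of_forall_norm_le_mul {X E : Type*} [TopologicalSpace X]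
    [SeminormedAddGroup E] {K : Set X} (hK : IsCompact K) {h : X → E} (hh : ContinuousOn h K)
    (hcontr : ∀ z ∈ K, ∃ x ∈ K, ∃ c ∈ Ico (0 : ℝ) 1, ‖h z‖ ≤ c * ‖h x‖) :
    ∀ z ∈ K, ‖h z‖ = 0 := by
  rcases K.eq_empty_or_nonempty with rfl | hne
  · simp
  obtain ⟨z₀, hz₀, hmax⟩ := hK.exists_isMaxOn hne hh.norm
  have hz₀_zero : ‖h z₀‖ = 0 := by
    obtain ⟨x, hx, c, ⟨hc₀, hc₁⟩, hle⟩ := hcontr z₀ hz₀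
    have hself : ‖h z₀‖ ≤ c * ‖h z₀‖ := hle.trans (mul_le_mul_of_nonneg_left (hmax hx) hc₀)
    nlinarith [norm_nonneg (h z₀)]
  intro z hz
  exact le_antisymm (hz₀_zero ▸ hmax hz) (norm_nonneg _)

section Jensen

variable {α β a b : ℝ}

def JensenOnΓ (α β a b : ℝ) (f : ℝ → ℝ) : Prop :=
  ∀ x ∈ Icc a b, f (α * x + β * b) = α * f x + β * f b ∧ f (α * a + β * x) = α * f a + β * f x

theorem jensenOnΓ_affine (hαβ : α + β = 1) (lam mu : ℝ) :
    JensenOnΓ α β a b (fun z ↦ lam * z + mu) := fun _ _ ↦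
  ⟨by linear_combination (-mu) * hαβ, by linear_combination (-mu) * hαβ⟩

theorem JensenOnΓ.sub {f g : ℝ → ℝ} (hf : JensenOnΓ α β a b f) (hg : JensenOnΓ α β a b g) :
    JensenOnΓ α β a b (f - g) := fun x hx ↦ by
  obtain ⟨hf₁, hf₂⟩ := hf x hx
  obtain ⟨hg₁, hg₂⟩ := hg x hx
  simp only [Pi.sub_apply, hf₁, hf₂, hg₁, hg₂]
  constructor <;> ring

theorem exists_mem_Icc_eq_or_eq (hα : 0 < α) (hβ : 0 < β) (hαβ : α + β = 1) {z : ℝ}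
    (hz : z ∈ Icc a b) : ∃ x ∈ Icc a b, α * x + β * b = z ∨ α * a + β * x = z := by
  obtain ⟨hza, hzb⟩ := hz
  rcases le_total (α * a + β * b) z with hmid | hmid
  · refine ⟨(z - β * b) / α, ⟨?_, ?_⟩, Or.inl ?_⟩
    · rw [le_div_iff₀ hα]; linear_combination hmid
    · rw [div_le_iff₀ hα]; linear_combination hzb - b * hαβ
    · field_simp; ring
  · refine ⟨(z - α * a) / β, ⟨?_, ?_⟩, Or.inr ?_⟩
    · rw [le_div_iff₀ hβ]; linear_combination hza + a * hαβ
    · rw [div_le_iff₀ hβ]; linear_combination hmid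
    · field_simp; ring

theorem JensenOnΓ.eqOn_zero (hα : 0 < α) (hβ : 0 < β) (hαβ : α + β = 1) {h : ℝ → ℝ}
    (hJ : JensenOnΓ α β a b h) (hc : ContinuousOn h (Icc a b)) (ha : h a = 0) (hb : h b = 0) :
    EqOn h 0 (Icc a b) := by
  have hcontr : ∀ z ∈ Icc a b, ∃ x ∈ Icc a b, ∃ c ∈ Ico (0 : ℝ) 1, ‖h z‖ ≤ c * ‖h x‖ := by
    intro z hz
    obtain ⟨x, hx, rfl | rfl⟩ := exists_mem_Icc_eq_or_eq hα hβ hαβ hz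
    · refine ⟨x, hx, α, ⟨hα.le, by linarith⟩, le_of_eq ?_⟩
      rw [(hJ x hx).1, hb, mul_zero, add_zero, norm_mul, Real.norm_of_nonneg hα.le]
    · refine ⟨x, hx, β, ⟨hβ.le, by linarith⟩, le_of_eq ?_⟩
      rw [(hJ x hx).2, ha, mul_zero, zero_add, norm_mul, Real.norm_of_nonneg hβ.le]
  intro z hz
  exact norm_eq_zero.mp (isCompact_Icc.norm_eq_zero_of_forall_norm_le_mul hc hcontr z hz)

theorem JensenOnΓ.eqOn (hα : 0 < α) (hβ : 0 < β) (hαβ : α + β = 1) {f g : ℝ → ℝ}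
    (hfJ : JensenOnΓ α β a b f) (hgJ : JensenOnΓ α β a b g) (hf : ContinuousOn f (Icc a b))
    (hg : ContinuousOn g (Icc a b)) (ha : f a = g a) (hb : f b = g b) : EqOn f g (Icc a b) :=
  fun _ hz ↦ sub_eq_zero.mp <|
    (hfJ.sub hgJ).eqOn_zero hα hβ hαβ (hf.sub hg) (sub_eq_zero.mpr ha) (sub_eq_zero.mpr hb) hz

end Jensen

theorem jensen_overdetermined
    {α β a b : ℝ} (hα : 0 < α) (hβ : 0 < β) (hαβ : α + β = 1) (hab : a < b)
    (f : ℝ → ℝ) (hf : ContinuousOn f (Set.Icc a b))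
    (heq : ∀ x ∈ Set.Icc a b,
      f (α * x + β * b) = α * f x + β * f b ∧
      f (α * a + β * x) = α * f a + β * f x) :
    (∃ lam mu : ℝ, ∀ z ∈ Set.Icc a b, f z = lam * z + mu) ∧
    ∀ g : ℝ → ℝ, ContinuousOn g (Set.Icc a b) →
      (∀ x ∈ Set.Icc a b,
        g (α * x + β * b) = α * g x + β * g b ∧
        g (α * a + β * x) = α * g a + β * g x) →
      g a = f a → g b = f b → ∀ z ∈ Set.Icc a b, g z = f z := by
  refine ⟨?_, fun g hg hgJ ha hb ↦ JensenOnΓ.eqOn hα hβ hαβ hgJ heq hg hf ha hb⟩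
  set lam := (f b - f a) / (b - a)
  have hba : b - a ≠ 0 := sub_ne_zero.mpr hab.ne'
  refine ⟨lam, f a - lam * a, JensenOnΓ.eqOn hα hβ hαβ heq (jensenOnΓ_affine hαβ _ _) hf
    (by fun_prop) (by ring) ?_⟩
  simp only [lam]
  field_simp
  ring
end

section
/- Let I = [a,b] with a < b, and α, β > 0 with α + β = 1. Define δ₁(x) = αa + βx and δ₂(x) = αx + βb on I. Then for every x ∈ I, the set of points obtained from x by finite compositions of δ₁ and δ₂ is dense in [a,b]. -/
theorem affine_ifs_orbit_dense
    {α β a b : ℝ} (hα : 0 < α) (hβ : 0 < β) (hαβ : α + β = 1) (hab : a < b) :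
    ∀ x ∈ Set.Icc a b,
      Set.Icc a b ⊆
        closure {y : ℝ | ∃ l : List Bool,
          l.foldr (fun s t => if s then α * a + β * t else α * t + β * b) x = y} := by
  intro x hx z hz
  rw [Metric.mem_closure_iff]
  intro ε hε
  set γ := max α β with hγdef
  have hγ0 : 0 < γ := lt_of_lt_of_le hα (le_max_left _ _)
  have hγ1 : γ < 1 := by
    rcases max_cases α β with ⟨h, _⟩ | ⟨h, _⟩ <;> rw [hγdef, h] <;> linarith
  have haa : α * a + β * a = a := by rw [← add_mul, hαβ, one_mul]
  have hbb : α * b + β * b = b := by rw [← add_mul, hαβ, one_mul]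
  have hba : b - a ≠ 0 := sub_ne_zero.mpr hab.ne'
  have key : ∀ n : ℕ, ∀ w ∈ Set.Icc a b, ∃ l : List Bool,
      |l.foldr (fun s t => if s then α * a + β * t else α * t + β * b) x - w|
        ≤ (b - a) * γ ^ n := by
    intro n
    induction n with
    | zero =>
      intro w hw
      refine ⟨[], ?_⟩
      simp only [List.foldr_nil, pow_zero, mul_one]
      rw [abs_le]
      constructor <;> [nlinarith [hx.1, hw.2]; nlinarith [hx.2, hw.1]]
    | succ n ih =>
      intro w hw
      have hγn : (0:ℝ) ≤ γ ^ n := pow_nonneg hγ0.le n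
      by_cases hc : w ≤ α * a + β * b
      · have hw' : (w - α * a) / β ∈ Set.Icc a b := by
          constructor
          · rw [le_div_iff₀ hβ]; nlinarith [hw.1]
          · rw [div_le_iff₀ hβ]; nlinarith
        obtain ⟨l, hl⟩ := ih _ hw'
        refine ⟨true :: l, ?_⟩
        simp only [List.foldr_cons, if_true]
        set F := l.foldr (fun s t => if s then α * a + β * t else α * t + β * b) x
        have heq : α * a + β * F - w = β * (F - (w - α * a) / β) := by
          field_simp; ring
        rw [heq, abs_mul, abs_of_pos hβ]
        have hβγ : β ≤ γ := le_max_right _ _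
        calc β * |F - (w - α * a) / β| ≤ β * ((b - a) * γ ^ n) :=
              mul_le_mul_of_nonneg_left hl hβ.le
          _ ≤ γ * ((b - a) * γ ^ n) :=
              mul_le_mul_of_nonneg_right hβγ (mul_nonneg (by linarith) hγn)
          _ = (b - a) * γ ^ (n + 1) := by rw [pow_succ]; ring
      · have hw' : (w - β * b) / α ∈ Set.Icc a b := by
          constructor
          · rw [le_div_iff₀ hα]; nlinarith
          · rw [div_le_iff₀ hα]; nlinarith [hw.2]
        obtain ⟨l, hl⟩ := ih _ hw'
        refine ⟨false :: l, ?_⟩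
        simp only [List.foldr_cons, Bool.false_eq_true, if_false]
        set F := l.foldr (fun s t => if s then α * a + β * t else α * t + β * b) x
        have heq : α * F + β * b - w = α * (F - (w - β * b) / α) := by
          field_simp; ring
        rw [heq, abs_mul, abs_of_pos hα]
        have hαγ : α ≤ γ := le_max_left _ _
        calc α * |F - (w - β * b) / α| ≤ α * ((b - a) * γ ^ n) :=
              mul_le_mul_of_nonneg_left hl hα.le
          _ ≤ γ * ((b - a) * γ ^ n) :=
              mul_le_mul_of_nonneg_right hαγ (mul_nonneg (by linarith) hγn)
          _ = (b - a) * γ ^ (n + 1) := by rw [pow_succ]; ring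
  obtain ⟨n, hn⟩ := exists_pow_lt_of_lt_one
    (show (0:ℝ) < ε / (b - a) from div_pos hε (by linarith)) hγ1
  obtain ⟨l, hl⟩ := key n z hz
  refine ⟨_, ⟨l, rfl⟩, ?_⟩
  rw [Real.dist_eq, abs_sub_comm]
  calc |l.foldr (fun s t => if s then α * a + β * t else α * t + β * b) x - z|
      ≤ (b - a) * γ ^ n := hl
    _ < (b - a) * (ε / (b - a)) := mul_lt_mul_of_pos_left hn (by linarith)
    _ = ε := by rw [mul_comm, div_mul_cancel₀ _ hba]
end

section
/- Let I = [a,b], H : ℝ × ℝ × I × I → ℝ, and F : I² → I continuous with |F(x,b)−F(y,b)| < |x−y| and |F(a,x)−F(a,y)| < |x−y| for x ≠ y, and with F(a,x₀) = a, F(y₀,b) = b for some x₀,y₀ ∈ I. Then for any A, B ∈ ℝ there exists at most one continuous f : I → ℝ satisfying f(F(x,y)) = H(f(x),f(y),x,y) for all (x,y) ∈ I² together with f(a) = A and f(b) = B. -/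
open Set Metric

/-- Auxiliary contradiction lemma: if `E ⊆ [a,b]` is closed containing `a, b`,
`g` is a weak contraction on `[a,b]` mapping `E` into `E`, `M > 0` bounds
`infDist · E` on `[a,b]`, and `g s` attains this bound, we get a contradiction. -/
lemma aux_contr_unique {a b : ℝ} {E : Set ℝ} (hEc : IsClosed E)
    (hEI : E ⊆ Set.Icc a b) (haE : a ∈ E) (hbE : b ∈ E)
    {g : ℝ → ℝ} (hgE : ∀ x ∈ E, g x ∈ E)
    (hg : ∀ x ∈ Set.Icc a b, ∀ y ∈ Set.Icc a b, x ≠ y → |g x - g y| < |x - y|)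
    {M : ℝ} (hMpos : 0 < M)
    (hmax : ∀ x ∈ Set.Icc a b, infDist x E ≤ M)
    {s : ℝ} (hsI : s ∈ Set.Icc a b) (hts : infDist (g s) E = M) : False := by
  have hEne : E.Nonempty := ⟨a, haE⟩
  have hsE : s ∉ E := by
    intro hsE
    have h0 : infDist (g s) E = 0 := infDist_zero_of_mem (hgE s hsE)
    rw [hts] at h0
    linarith
  set U := E ∩ Set.Icc a s with hU
  have hUne : U.Nonempty := ⟨a, haE, le_refl a, hsI.1⟩
  have hUbdd : BddAbove U := ⟨s, fun x hx => hx.2.2⟩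
  have huU : sSup U ∈ U := (hEc.inter isClosed_Icc).csSup_mem hUne hUbdd
  set u := sSup U with hu
  have hus : u ≤ s := huU.2.2
  have huE : u ∈ E := huU.1
  have hune : u ≠ s := fun h => hsE (h ▸ huE)
  have huI : u ∈ Set.Icc a b := ⟨huU.2.1, hus.trans hsI.2⟩
  set V := E ∩ Set.Icc s b with hV
  have hVne : V.Nonempty := ⟨b, hbE, hsI.2, le_refl b⟩
  have hVbdd : BddBelow V := ⟨s, fun x hx => hx.2.1⟩
  have hvV : sInf V ∈ V := (hEc.inter isClosed_Icc).csInf_mem hVne hVbdd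
  set v := sInf V with hv
  have hsv : s ≤ v := hvV.2.1
  have hvE : v ∈ E := hvV.1
  have hvne : v ≠ s := fun h => hsE (h ▸ hvE)
  have hvI : v ∈ Set.Icc a b := ⟨hsI.1.trans hsv, hvV.2.2⟩
  -- lower bound for infDist s E
  have hlow : min (s - u) (v - s) ≤ infDist s E := by
    by_contra hlt
    push_neg at hlt
    obtain ⟨e, he, hde⟩ := (infDist_lt_iff hEne).mp hlt
    rcases le_total e s with hes | hse
    · have heU : e ∈ U := ⟨he, (hEI he).1, hes⟩
      have : e ≤ u := le_csSup hUbdd heU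
      have hd : dist s e = s - e := by
        rw [Real.dist_eq, abs_of_nonneg (by linarith)]
      rw [hd] at hde
      have := min_le_left (s - u) (v - s)
      linarith
    · have heV : e ∈ V := ⟨he, hse, (hEI he).2⟩
      have : v ≤ e := csInf_le hVbdd heV
      have hd : dist s e = e - s := by
        rw [Real.dist_eq, abs_of_nonpos (by linarith), neg_sub]
      rw [hd] at hde
      have := min_le_right (s - u) (v - s)
      linarith
  -- upper bounds using the contraction
  have h1 : M < s - u := by
    have hle : infDist (g s) E ≤ dist (g s) (g u) :=
      infDist_le_dist_of_mem (hgE u huE)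
    have hc : |g s - g u| < |s - u| := hg s hsI u huI (fun h => hune h.symm)
    rw [Real.dist_eq] at hle
    rw [abs_of_nonneg (by linarith : (0:ℝ) ≤ s - u)] at hc
    rw [hts] at hle
    linarith
  have h2 : M < v - s := by
    have hle : infDist (g s) E ≤ dist (g s) (g v) :=
      infDist_le_dist_of_mem (hgE v hvE)
    have hc : |g s - g v| < |s - v| := hg s hsI v hvI (fun h => hvne h.symm)
    rw [Real.dist_eq] at hle
    rw [abs_of_nonpos (by linarith : s - v ≤ 0), neg_sub] at hc
    rw [hts] at hle
    linarith
  have h3 : infDist s E ≤ M := hmax s hsI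
  have h4 : M < min (s - u) (v - s) := lt_min h1 h2
  linarith [le_trans h4.le hlow]

theorem uniqueness_full_square
    {a b : ℝ} (hab : a < b)
    (H : ℝ → ℝ → ℝ → ℝ → ℝ) (F : ℝ → ℝ → ℝ)
    (hFmap : ∀ x ∈ Set.Icc a b, ∀ y ∈ Set.Icc a b, F x y ∈ Set.Icc a b)
    (hFcont : ContinuousOn (fun p : ℝ × ℝ => F p.1 p.2) (Set.Icc a b ×ˢ Set.Icc a b))
    (hcontr : ∀ x ∈ Set.Icc a b, ∀ y ∈ Set.Icc a b, x ≠ y →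
      |F x b - F y b| < |x - y| ∧ |F a x - F a y| < |x - y|)
    (hx₀ : ∃ x₀ ∈ Set.Icc a b, F a x₀ = a)
    (hy₀ : ∃ y₀ ∈ Set.Icc a b, F y₀ b = b)
    (A B : ℝ) (f₁ f₂ : ℝ → ℝ)
    (hf₁ : ContinuousOn f₁ (Set.Icc a b)) (hf₂ : ContinuousOn f₂ (Set.Icc a b))
    (heq₁ : ∀ x ∈ Set.Icc a b, ∀ y ∈ Set.Icc a b,
      f₁ (F x y) = H (f₁ x) (f₁ y) x y)
    (heq₂ : ∀ x ∈ Set.Icc a b, ∀ y ∈ Set.Icc a b,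
      f₂ (F x y) = H (f₂ x) (f₂ y) x y)
    (ha₁ : f₁ a = A) (hb₁ : f₁ b = B) (ha₂ : f₂ a = A) (hb₂ : f₂ b = B) :
    ∀ x ∈ Set.Icc a b, f₁ x = f₂ x := by
  have haI : a ∈ Set.Icc a b := left_mem_Icc.2 hab.le
  have hbI : b ∈ Set.Icc a b := right_mem_Icc.2 hab.le
  set E := {x : ℝ | x ∈ Set.Icc a b ∧ f₁ x = f₂ x} with hEdef
  have hEI : E ⊆ Set.Icc a b := fun x hx => hx.1
  have haE : a ∈ E := ⟨haI, by rw [ha₁, ha₂]⟩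
  have hbE : b ∈ E := ⟨hbI, by rw [hb₁, hb₂]⟩
  have hstab : ∀ x ∈ E, ∀ y ∈ E, F x y ∈ E := by
    rintro x ⟨hxI, hx⟩ y ⟨hyI, hy⟩
    refine ⟨hFmap x hxI y hyI, ?_⟩
    rw [heq₁ x hxI y hyI, hx, hy, ← heq₂ x hxI y hyI]
  have hEclosed : IsClosed E := by
    have h1 : ContinuousOn (fun x => f₁ x - f₂ x) (Set.Icc a b) := hf₁.sub hf₂
    have hE2 : E = Set.Icc a b ∩ (fun x => f₁ x - f₂ x) ⁻¹' {0} := by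
      ext x
      simp only [hEdef, Set.mem_setOf_eq, Set.mem_inter_iff, Set.mem_preimage,
        Set.mem_singleton_iff, sub_eq_zero]
    rw [hE2]
    exact h1.preimage_isClosed_of_isClosed isClosed_Icc isClosed_singleton
  have hEne : E.Nonempty := ⟨a, haE⟩
  by_contra hcon
  push_neg at hcon
  obtain ⟨z, hzI, hzne⟩ := hcon
  have hzE : z ∉ E := fun h => hzne h.2
  have hzpos : 0 < infDist z E :=
    (hEclosed.notMem_iff_infDist_pos hEne).mp hzE
  obtain ⟨t, htI, htmax⟩ := isCompact_Icc.exists_isMaxOn (Set.nonempty_Icc.2 hab.le)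
    (continuous_infDist_pt E).continuousOn
  have hmax : ∀ x ∈ Set.Icc a b, infDist x E ≤ infDist t E := fun x hx => htmax hx
  have hMpos : 0 < infDist t E := lt_of_lt_of_le hzpos (hmax z hzI)
  -- continuity of the edge maps
  have hψ : ContinuousOn (fun y => F a y) (Set.Icc a b) := by
    have : ContinuousOn (fun y : ℝ => ((a, y) : ℝ × ℝ)) (Set.Icc a b) :=
      (continuous_const.prodMk continuous_id).continuousOn
    exact hFcont.comp this (fun y hy => ⟨haI, hy⟩)
  have hφ : ContinuousOn (fun x => F x b) (Set.Icc a b) := by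
    have : ContinuousOn (fun x : ℝ => ((x, b) : ℝ × ℝ)) (Set.Icc a b) :=
      (continuous_id.prodMk continuous_const).continuousOn
    exact hFcont.comp this (fun x hx => ⟨hx, hbI⟩)
  obtain ⟨x₀, hx₀I, hx₀⟩ := hx₀
  obtain ⟨y₀, hy₀I, hy₀⟩ := hy₀
  have hwI : F a b ∈ Set.Icc a b := hFmap a haI b hbI
  have hIcc_eq : Set.Icc a b = Set.uIcc a b := (Set.uIcc_of_le hab.le).symm
  rcases le_total t (F a b) with htw | hwt
  · -- t is in the range of ψ = F a ·
    have hsub : Set.uIcc x₀ b ⊆ Set.Icc a b := by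
      rw [hIcc_eq]
      exact Set.uIcc_subset_uIcc (hIcc_eq ▸ hx₀I) (hIcc_eq ▸ hbI)
    have himg := intermediate_value_uIcc (hψ.mono hsub)
    have htmem : t ∈ Set.uIcc (F a x₀) (F a b) := by
      rw [hx₀]
      exact Set.Icc_subset_uIcc ⟨htI.1, htw⟩
    obtain ⟨s, hs, hst⟩ := himg htmem
    exact aux_contr_unique hEclosed hEI haE hbE
      (fun x hx => hstab a haE x hx)
      (fun x hx y hy hxy => (hcontr x hx y hy hxy).2)
      hMpos hmax (hsub hs) (by rw [show F a s = t from hst])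
  · -- t is in the range of φ = F · b
    have hsub : Set.uIcc a y₀ ⊆ Set.Icc a b := by
      rw [hIcc_eq]
      exact Set.uIcc_subset_uIcc (hIcc_eq ▸ haI) (hIcc_eq ▸ hy₀I)
    have himg := intermediate_value_uIcc (hφ.mono hsub)
    have htmem : t ∈ Set.uIcc (F a b) (F y₀ b) := by
      rw [hy₀]
      exact Set.Icc_subset_uIcc ⟨hwt, htI.2⟩
    obtain ⟨s, hs, hst⟩ := himg htmem
    exact aux_contr_unique hEclosed hEI haE hbE
      (fun x hx => hstab x hx b hbE)
      (fun x hx y hy hxy => (hcontr x hx y hy hxy).1)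
      hMpos hmax (hsub hs) (by rw [show F s b = t from hst])
end
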